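/- For every n ∈ ℕ and β ∈ (0,1] with continued fraction [0;a_1,a_2,…], the endpoints of the n-th Farey cylinder of β are convergents: f_{1,ω_1(β)|_n}(0) = p_{m(n)}/q_{m(n)} = [0;a_1,…,a_{m(n)}] and f_{1,ω_1(β)|_n}(1) = ((r(n)+1)p_{m(n)} + p_{m(n)-1})/((r(n)+1)q_{m(n)} + q_{m(n)-1}) = [0;a_1,…,a_{m(n)}, r(n)+1]. -/
import Mathlib


/-- The Farey map. -/
noncomputable def T1 (x : ℝ) : ℝ := if x ≤ 1/2 then x / (1 - x) else (1 - x) / x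

/-- Left inverse branch of the Farey map. -/
noncomputable def g0 (x : ℝ) : ℝ := x / (1 + x)

/-- Right inverse branch of the Farey map. -/
noncomputable def g1 (x : ℝ) : ℝ := 1 / (1 + x)

open scoped Classical in
/-- `F β n = f_{1,ω₁(β)|ₙ}`, the composition of the Farey inverse branches along the
coding of `β` (where `ω_{1,k}(β) = 1` iff `T₁^{k-1}(β) > 1/2`). -/
noncomputable def F (β : ℝ) : ℕ → ℝ → ℝ
  | 0 => id
  | n + 1 => F β n ∘ (if 1/2 < T1^[n] β then g1 else g0)

/-- Shifted continued fraction numerators: `P a 0 = p₋₁ = 1`, `P a (k+1) = p_k`,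
with `p_k = a_k p_{k-1} + p_{k-2}`. -/
def P (a : ℕ → ℕ) : ℕ → ℕ
  | 0 => 1
  | 1 => 0
  | n + 2 => a (n + 1) * P a (n + 1) + P a n

/-- Shifted continued fraction denominators: `Q a 0 = q₋₁ = 0`, `Q a (k+1) = q_k`,
with `q_k = a_k q_{k-1} + q_{k-2}`. -/
def Q (a : ℕ → ℕ) : ℕ → ℕ
  | 0 => 0
  | 1 => 1
  | n + 2 => a (n + 1) * Q a (n + 1) + Q a n

open scoped Classical in
/-- `m(n)`: the number of indices `ℓ ≤ n` with `T₁^{ℓ-1}(β) > 1/2`. -/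
noncomputable def mfun (β : ℝ) (n : ℕ) : ℕ :=
  ((Finset.Icc 1 n).filter (fun ℓ => 1/2 < T1^[ℓ - 1] β)).card

open scoped Classical in
/-- `k(n) = max {ℓ ≤ n : T₁^{ℓ-1}(β) > 1/2}` (with value `0` if no such index exists). -/
noncomputable def kfun (β : ℝ) (n : ℕ) : ℕ :=
  ((Finset.Icc 1 n).filter (fun ℓ => 1/2 < T1^[ℓ - 1] β)).sup id

/-- The Gauss map. -/
noncomputable def gauss (x : ℝ) : ℝ := 1/x - ⌊1/x⌋

/-- `β` has infinite continued fraction expansion `[0; a 1, a 2, …]`. -/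
def HasCF (β : ℝ) (a : ℕ → ℕ) : Prop :=
  ∀ k : ℕ, gauss^[k] β ∈ Set.Ioo (0:ℝ) 1 ∧ (a (k + 1) : ℝ) = ⌊1 / gauss^[k] β⌋

/-- Finite continued fraction value: `cfVal [b₁, …, bₙ] = [0; b₁, …, bₙ]`. -/
noncomputable def cfVal : List ℝ → ℝ
  | [] => 0
  | b :: l => 1 / (b + cfVal l)

open scoped Classical

/-! ### Auxiliary lemmas -/

lemma gauss_facts (β : ℝ) (a : ℕ → ℕ) (ha : HasCF β a) (k : ℕ) :
    gauss^[k] β ∈ Set.Ioo (0:ℝ) 1 ∧ 1 ≤ a (k+1) ∧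
    (a (k+1) : ℝ) < 1 / gauss^[k] β ∧ 1 / gauss^[k] β < a (k+1) + 1 ∧
    gauss^[k+1] β = 1 / gauss^[k] β - a (k+1) := by
  obtain ⟨hmem, hfl⟩ := ha k
  obtain ⟨hmem', _⟩ := ha (k+1)
  have hnext : gauss^[k+1] β = 1 / gauss^[k] β - (a (k+1) : ℝ) := by
    rw [Function.iterate_succ_apply', gauss, hfl]
  rw [hnext] at hmem'
  obtain ⟨h0, h1⟩ := hmem'
  have hy1 : 1 < 1 / gauss^[k] β := by
    rw [lt_div_iff₀ hmem.1]; linarith [hmem.2]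
  have ha1 : (1:ℝ) ≤ a (k+1) := by
    have : (0:ℝ) < a (k+1) := by linarith
    exact_mod_cast Nat.one_le_iff_ne_zero.mpr (by exact_mod_cast this.ne')
  exact ⟨hmem, by exact_mod_cast ha1, by linarith, by linarith, hnext⟩

lemma Q_pos (a : ℕ → ℕ) (ha : ∀ k, 1 ≤ a (k+1)) : ∀ m, 1 ≤ Q a (m+1) := by
  intro m
  induction m using Nat.strong_induction_on with
  | _ m ih =>
    match m with
    | 0 => simp [Q]
    | m+1 =>
      have h1 := ih m (by omega)
      have h2 := ha m
      show 1 ≤ a (m+1) * Q a (m+1) + Q a m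
      calc 1 ≤ 1 * 1 := by norm_num
        _ ≤ a (m+1) * Q a (m+1) := Nat.mul_le_mul h2 h1
        _ ≤ _ := Nat.le_add_right _ _

lemma cfVal_append (a : ℕ → ℕ) (ha : ∀ k, 1 ≤ a (k+1)) :
    ∀ m : ℕ, ∀ t : List ℝ, 0 ≤ cfVal t →
      cfVal ((List.range m).map (fun i => (a (i+1) : ℝ)) ++ t)
        = (cfVal t * P a m + P a (m+1)) / (cfVal t * Q a m + Q a (m+1)) := by
  intro m
  induction m with
  | zero =>
    intro t ht
    simp [P, Q]
  | succ m ih =>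
    intro t ht
    have hrange : (List.range (m+1)).map (fun i => (a (i+1) : ℝ)) ++ t
        = (List.range m).map (fun i => (a (i+1) : ℝ)) ++ ((a (m+1) : ℝ) :: t) := by
      rw [List.range_succ, List.map_append, List.append_assoc]
      rfl
    have ha1 : (1:ℝ) ≤ a (m+1) := by exact_mod_cast ha m
    have hapos : (0:ℝ) < (a (m+1) : ℝ) + cfVal t := by linarith
    have hc : cfVal ((a (m+1) : ℝ) :: t) = 1 / ((a (m+1) : ℝ) + cfVal t) := rfl
    have hc0 : 0 ≤ cfVal ((a (m+1) : ℝ) :: t) := by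
      rw [hc]; positivity
    rw [hrange, ih _ hc0, hc]
    have hQ1 : (1:ℝ) ≤ Q a (m+1) := by exact_mod_cast Q_pos a ha m
    have hQ2 : (1:ℝ) ≤ Q a (m+2) := by exact_mod_cast Q_pos a ha (m+1)
    have hQm : (0:ℝ) ≤ Q a m := by positivity
    have hd1 : (0:ℝ) < 1 / ((a (m+1) : ℝ) + cfVal t) * Q a m + Q a (m+1) := by
      have : (0:ℝ) ≤ 1 / ((a (m+1) : ℝ) + cfVal t) * Q a m := by positivity
      linarith
    have hd2 : (0:ℝ) < cfVal t * Q a (m+1) + Q a (m+2) := by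
      have : (0:ℝ) ≤ cfVal t * Q a (m+1) := by positivity
      linarith
    rw [div_eq_div_iff hd1.ne' hd2.ne']
    have hP2 : (P a (m+2) : ℝ) = a (m+1) * P a (m+1) + P a m := by
      show ((a (m+1) * P a (m+1) + P a m : ℕ) : ℝ) = _
      push_cast; ring
    have hQ2' : (Q a (m+2) : ℝ) = a (m+1) * Q a (m+1) + Q a m := by
      show ((a (m+1) * Q a (m+1) + Q a m : ℕ) : ℝ) = _
      push_cast; ring
    rw [hP2, hQ2']
    field_simp
    ring

lemma mfun_zero (β : ℝ) : mfun β 0 = 0 := by simp [mfun]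

lemma kfun_zero (β : ℝ) : kfun β 0 = 0 := by simp [kfun]

lemma kfun_le (β : ℝ) (n : ℕ) : kfun β n ≤ n := by
  apply Finset.sup_le
  intro b hb
  simp only [Finset.mem_filter, Finset.mem_Icc] at hb
  exact hb.1.2

lemma filter_succ (β : ℝ) (n : ℕ) :
    ((Finset.Icc 1 (n+1)).filter (fun ℓ => 1/2 < T1^[ℓ - 1] β))
      = if 1/2 < T1^[n] β
        then insert (n+1) ((Finset.Icc 1 n).filter (fun ℓ => 1/2 < T1^[ℓ-1] β))
        else (Finset.Icc 1 n).filter (fun ℓ => 1/2 < T1^[ℓ-1] β) := by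
  rw [← Finset.insert_Icc_right_eq_Icc_add_one (by omega : 1 ≤ n+1), Finset.filter_insert]
  simp only [Nat.add_sub_cancel]

lemma mfun_succ_true (β : ℝ) (n : ℕ) (h : 1/2 < T1^[n] β) :
    mfun β (n+1) = mfun β n + 1 := by
  rw [mfun, filter_succ, if_pos h, Finset.card_insert_of_notMem, mfun]
  intro hmem
  simp only [Finset.mem_filter, Finset.mem_Icc] at hmem
  omega

lemma mfun_succ_false (β : ℝ) (n : ℕ) (h : ¬ 1/2 < T1^[n] β) :
    mfun β (n+1) = mfun β n := by
  rw [mfun, filter_succ, if_neg h, mfun]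

lemma kfun_succ_true (β : ℝ) (n : ℕ) (h : 1/2 < T1^[n] β) :
    kfun β (n+1) = n + 1 := by
  rw [kfun, filter_succ, if_pos h, Finset.sup_insert]
  have : ((Finset.Icc 1 n).filter (fun ℓ => 1/2 < T1^[ℓ-1] β)).sup id ≤ n := kfun_le β n
  simp only [id]
  omega

lemma kfun_succ_false (β : ℝ) (n : ℕ) (h : ¬ 1/2 < T1^[n] β) :
    kfun β (n+1) = kfun β n := by
  rw [kfun, filter_succ, if_neg h, kfun]

lemma F_succ (β : ℝ) (n : ℕ) (x : ℝ) :
    F β (n+1) x = F β n ((if 1/2 < T1^[n] β then g1 else g0) x) := rfl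

lemma T1_left (v : ℝ) (h2 : 1 < v) : (1/v) / (1 - 1/v) = 1/(v-1) := by
  have h0 : v ≠ 0 := by linarith
  have h1 : v - 1 ≠ 0 := by linarith
  field_simp

lemma T1_right (v : ℝ) (h1 : 1 < v) : (1 - 1/v)/(1/v) = v - 1 := by
  have h0 : v ≠ 0 := by linarith
  field_simp

lemma step_g1 (pA pB qA qB x : ℝ) (hx : 0 ≤ x) (hqA : 0 ≤ qA) (hqB : 1 ≤ qB) :
    (1/(1+x) * pA + pB) / (1/(1+x) * qA + qB)
      = (x * pB + (pA + pB)) / (x * qB + (qA + qB)) := by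
  have h1x : (0:ℝ) < 1 + x := by linarith
  have hd1 : (0:ℝ) < 1/(1+x) * qA + qB := by
    have : (0:ℝ) ≤ 1/(1+x) * qA := by positivity
    linarith
  have hd2 : (0:ℝ) < x * qB + (qA + qB) := by nlinarith
  rw [div_eq_div_iff hd1.ne' hd2.ne']
  field_simp
  ring

lemma step_g0 (pA pB qA qB x : ℝ) (hx : 0 ≤ x) (hqA : 0 ≤ qA) (hqB : 1 ≤ qB) :
    (x/(1+x) * pA + pB) / (x/(1+x) * qA + qB)
      = (x * (pA + pB) + pB) / (x * (qA + qB) + qB) := by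
  have h1x : (0:ℝ) < 1 + x := by linarith
  have hd1 : (0:ℝ) < x/(1+x) * qA + qB := by
    have : (0:ℝ) ≤ x/(1+x) * qA := by positivity
    linarith
  have hd2 : (0:ℝ) < x * (qA + qB) + qB := by nlinarith
  rw [div_eq_div_iff hd1.ne' hd2.ne']
  field_simp
  ring

lemma farey_main (β : ℝ) (a : ℕ → ℕ) (ha : HasCF β a) (n : ℕ) :
    (n - kfun β n) + 1 ≤ a (mfun β n + 1) ∧
    T1^[n] β = 1 / (1 / gauss^[mfun β n] β - ((n - kfun β n : ℕ) : ℝ)) ∧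
    ∀ x : ℝ, 0 ≤ x →
      F β n x = (x * ((P a (mfun β n) : ℝ) + ((n - kfun β n : ℕ) : ℝ) * P a (mfun β n + 1)) + P a (mfun β n + 1)) /
                (x * ((Q a (mfun β n) : ℝ) + ((n - kfun β n : ℕ) : ℝ) * Q a (mfun β n + 1)) + Q a (mfun β n + 1)) := by
  have haQ : ∀ k, 1 ≤ a (k+1) := fun k => (gauss_facts β a ha k).2.1
  induction n with
  | zero =>
    obtain ⟨hy, ha1, _, _, _⟩ := gauss_facts β a ha 0
    refine ⟨by simpa [mfun_zero, kfun_zero] using ha1, ?_, ?_⟩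
    · simp only [mfun_zero, kfun_zero, Function.iterate_zero_apply, Nat.sub_zero,
        Nat.cast_zero, sub_zero, one_div, inv_inv]
    · intro x hx
      simp [mfun_zero, kfun_zero, F, P, Q]
  | succ n ih =>
    obtain ⟨h1, h2, h3⟩ := ih
    obtain ⟨hy, ha1, hlt, hlt', hnext⟩ := gauss_facts β a ha (mfun β n)
    have hra : ((n - kfun β n : ℕ) : ℝ) + 1 ≤ a (mfun β n + 1) := by exact_mod_cast h1
    have hur : ((n - kfun β n : ℕ) : ℝ) + 1 < 1 / gauss^[mfun β n] β := lt_of_le_of_lt hra hlt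
    have hkle : kfun β n ≤ n := kfun_le β n
    have hQ1 : (1:ℝ) ≤ Q a (mfun β n + 1) := by exact_mod_cast Q_pos a haQ (mfun β n)
    have hQm : (0:ℝ) ≤ Q a (mfun β n) := by positivity
    by_cases hS : 1/2 < T1^[n] β
    · -- symbol 1: must have (n - kfun β n) + 1 = a (mfun β n + 1)
      have hreq : (n - kfun β n) + 1 = a (mfun β n + 1) := by
        by_contra hne
        have h2a : ((n - kfun β n : ℕ) : ℝ) + 2 ≤ a (mfun β n + 1) := by
          have : (n - kfun β n) + 2 ≤ a (mfun β n + 1) := by omega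
          exact_mod_cast this
        have hgt : 2 < 1 / gauss^[mfun β n] β - ((n - kfun β n : ℕ) : ℝ) := by linarith
        have : T1^[n] β < 1/2 := by
          rw [h2, div_lt_div_iff₀ (by linarith) (by norm_num)]
          linarith
        linarith
      have hraeq : (a (mfun β n + 1) : ℝ) = ((n - kfun β n : ℕ) : ℝ) + 1 := by
        exact_mod_cast hreq.symm
      have hm' : mfun β (n+1) = mfun β n + 1 := mfun_succ_true β n hS
      have hk' : kfun β (n+1) = n + 1 := kfun_succ_true β n hS
      have hr' : (n+1) - kfun β (n+1) = 0 := by omega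
      have hx12 : 1 < 1 / gauss^[mfun β n] β - ((n - kfun β n : ℕ) : ℝ) := by linarith
      have hx2 : 1 / gauss^[mfun β n] β - ((n - kfun β n : ℕ) : ℝ) < 2 := by
        rw [hraeq] at hlt'; linarith
      obtain ⟨hy', ha1', _, _, _⟩ := gauss_facts β a ha (mfun β n + 1)
      refine ⟨?_, ?_, ?_⟩
      · rw [hm', hr']; omega
      · rw [hm', hr', Nat.cast_zero, sub_zero, one_div_one_div,
          Function.iterate_succ_apply', h2]
        simp only [T1]
        rw [if_neg (by
          rw [not_le, div_lt_div_iff₀ (by norm_num) (by linarith)]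
          linarith)]
        rw [T1_right _ hx12, hnext, hraeq]
        ring
      · intro x hx
        rw [F_succ, if_pos hS, hm', hr']
        simp only [Nat.cast_zero]
        have hg1 : g1 x = 1 / (1 + x) := rfl
        have hg1pos : 0 ≤ g1 x := by rw [hg1]; positivity
        rw [h3 _ hg1pos, hg1]
        rw [step_g1 _ _ _ _ x hx (by positivity) hQ1]
        have hP2 : (P a (mfun β n + 1 + 1) : ℝ)
            = a (mfun β n + 1) * P a (mfun β n + 1) + P a (mfun β n) := by
          show ((a (mfun β n + 1) * P a (mfun β n + 1) + P a (mfun β n) : ℕ) : ℝ) = _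
          push_cast; ring
        have hQ2' : (Q a (mfun β n + 1 + 1) : ℝ)
            = a (mfun β n + 1) * Q a (mfun β n + 1) + Q a (mfun β n) := by
          show ((a (mfun β n + 1) * Q a (mfun β n + 1) + Q a (mfun β n) : ℕ) : ℝ) = _
          push_cast; ring
        congr 1
        · rw [hP2, hraeq]; ring
        · rw [hQ2', hraeq]; ring
    · -- symbol 0
      have hlt2 : (n - kfun β n) + 2 ≤ a (mfun β n + 1) := by
        rcases Nat.lt_or_ge ((n - kfun β n) + 1) (a (mfun β n + 1)) with h | h
        · omega
        · exfalso
          have hreq : (n - kfun β n) + 1 = a (mfun β n + 1) := le_antisymm h1 h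
          have hraeq : (a (mfun β n + 1) : ℝ) = ((n - kfun β n : ℕ) : ℝ) + 1 := by
            exact_mod_cast hreq.symm
          rw [hraeq] at hlt'
          apply hS
          rw [h2, div_lt_div_iff₀ (by norm_num) (by linarith)]
          linarith
      have h2a : ((n - kfun β n : ℕ) : ℝ) + 2 ≤ a (mfun β n + 1) := by exact_mod_cast hlt2
      have hur2 : 2 < 1 / gauss^[mfun β n] β - ((n - kfun β n : ℕ) : ℝ) := by linarith
      have hm' : mfun β (n+1) = mfun β n := mfun_succ_false β n hS
      have hk' : kfun β (n+1) = kfun β n := kfun_succ_false β n hS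
      have hr' : (n+1) - kfun β (n+1) = (n - kfun β n) + 1 := by omega
      refine ⟨?_, ?_, ?_⟩
      · rw [hm', hr']; omega
      · rw [hm', hr', Function.iterate_succ_apply', h2]
        simp only [T1]
        rw [if_pos (by
          rw [div_le_div_iff₀ (by linarith) (by norm_num)]
          linarith)]
        rw [T1_left _ (by linarith : 1 < 1 / gauss^[mfun β n] β - ((n - kfun β n : ℕ) : ℝ))]
        push_cast
        ring_nf
      · intro x hx
        rw [F_succ, if_neg hS, hm', hr']
        push_cast
        have hg0 : g0 x = x / (1 + x) := rfl
        have h1x : (0:ℝ) < 1 + x := by linarith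
        have hg0pos : 0 ≤ g0 x := by rw [hg0]; positivity
        rw [h3 _ hg0pos, hg0]
        rw [step_g0 _ _ _ _ x hx (by positivity) hQ1]
        congr 1
        · ring
        · ring

theorem stmt_8 (β : ℝ) (hβ : β ∈ Set.Ioc (0:ℝ) 1) (a : ℕ → ℕ) (ha : HasCF β a) (n : ℕ) :
    F β n 0 = (P a (mfun β n + 1) : ℝ) / Q a (mfun β n + 1) ∧
    (P a (mfun β n + 1) : ℝ) / Q a (mfun β n + 1)
      = cfVal ((List.range (mfun β n)).map fun i => (a (i + 1) : ℝ)) ∧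
    F β n 1 =
      (((n - kfun β n : ℕ) + 1) * P a (mfun β n + 1) + P a (mfun β n) : ℝ) /
        (((n - kfun β n : ℕ) + 1) * Q a (mfun β n + 1) + Q a (mfun β n) : ℝ) ∧
    (((n - kfun β n : ℕ) + 1) * P a (mfun β n + 1) + P a (mfun β n) : ℝ) /
        (((n - kfun β n : ℕ) + 1) * Q a (mfun β n + 1) + Q a (mfun β n) : ℝ)
      = cfVal (((List.range (mfun β n)).map fun i => (a (i + 1) : ℝ))
          ++ [((n - kfun β n : ℕ) + 1 : ℝ)]) := by
  have haQ : ∀ k, 1 ≤ a (k+1) := fun k => (gauss_facts β a ha k).2.1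
  obtain ⟨h1, h2, h3⟩ := farey_main β a ha n
  have hQ1 : (1:ℝ) ≤ Q a (mfun β n + 1) := by exact_mod_cast Q_pos a haQ (mfun β n)
  have hQm : (0:ℝ) ≤ Q a (mfun β n) := by positivity
  have hr1 : (0:ℝ) < ((n - kfun β n : ℕ) : ℝ) + 1 := by positivity
  refine ⟨?_, ?_, ?_, ?_⟩
  · rw [h3 0 le_rfl]
    simp only [zero_mul, zero_add]
  · have hcnil : cfVal [] = 0 := rfl
    have key := cfVal_append a haQ (mfun β n) [] (by rw [hcnil])
    rw [List.append_nil, hcnil] at key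
    rw [key]
    simp only [zero_mul, zero_add]
  · rw [h3 1 zero_le_one]
    congr 1 <;> ring
  · have hcw : cfVal [((n - kfun β n : ℕ) : ℝ) + 1] = 1/(((n - kfun β n : ℕ) : ℝ) + 1) := by
      show 1 / (((n - kfun β n : ℕ) : ℝ) + 1 + cfVal []) = _
      show 1 / (((n - kfun β n : ℕ) : ℝ) + 1 + 0) = _
      rw [add_zero]
    have hc0 : 0 ≤ cfVal [((n - kfun β n : ℕ) : ℝ) + 1] := by rw [hcw]; positivity
    have key := cfVal_append a haQ (mfun β n) [((n - kfun β n : ℕ) : ℝ) + 1] hc0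
    rw [hcw] at key
    rw [key]
    have hd1 : (0:ℝ) < (((n - kfun β n : ℕ) : ℝ) + 1) * Q a (mfun β n + 1) + Q a (mfun β n) := by
      nlinarith
    have hd2 : (0:ℝ) < 1/(((n - kfun β n : ℕ) : ℝ) + 1) * Q a (mfun β n) + Q a (mfun β n + 1) := by
      have : (0:ℝ) ≤ 1/(((n - kfun β n : ℕ) : ℝ) + 1) * Q a (mfun β n) := by positivity
      linarith
    rw [div_eq_div_iff hd1.ne' hd2.ne']
    field_simp
    ring
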